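/- Let (P, d) be a graph with path metric and H_P its combinatorial horoball. There is a universal constant C such that for all points (x, m), (y, n) in H_P, |d_{H_P}((x,m),(y,n)) − max(|m − n|, 2·log₂(1 + d(x, y)) − (m + n))| ≤ C. -/

import Mathlib

/-!
Every edge of the horoball changes the level by at most one, which gives `|m - n| ≤ L` for the
distance `L`. For the logarithmic term, induct along a walk of length `L` from level `a` to
level `b`: `(1 + d)² ≤ 2 ^ (a + b + L + 3)`. A horizontal step at level `a` moves at most `2 ^ a`
in `P`, and as `a ≤ b + L` we have `8 · 4 ^ a ≤ 2 ^ (a + b + L + 3)`; by `(u + v)² ≤ 3u²/2 + 3v²`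
the square at most doubles, which the extra step pays for. Conversely, climb from both points to
level `k = max m n ⊔ ⌈log₂ d⌉`, where one horizontal edge joins them, and come back down.
-/

open SimpleGraph

/-- The Groves–Manning combinatorial horoball over a graph `G`: vertex set `V × ℕ`,
horizontal edges between `(x, m)` and `(y, m)` whenever `dist x y ≤ 2 ^ m`, and
vertical edges between `(x, m)` and `(x, m + 1)`. -/
def Horoball {V : Type*} (G : SimpleGraph V) : SimpleGraph (V × ℕ) where
  Adj p q :=
    (p.2 = q.2 ∧ p.1 ≠ q.1 ∧ G.dist p.1 q.1 ≤ 2 ^ p.2) ∨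
    (p.1 = q.1 ∧ (p.2 = q.2 + 1 ∨ q.2 = p.2 + 1))
  symm := by
    constructor
    rintro ⟨x, m⟩ ⟨y, n⟩ (⟨h1, h2, h3⟩ | ⟨h1, h2⟩)
    · exact Or.inl ⟨h1.symm, h2.symm, by simp only at h1 h3 ⊢; rw [SimpleGraph.dist_comm, ← h1]; exact h3⟩
    · exact Or.inr ⟨h1.symm, h2.symm⟩
  loopless := by
    constructor
    rintro ⟨x, m⟩ (⟨_, h, _⟩ | ⟨_, h | h⟩)
    · exact h rfl
    · omega
    · omega

lemma add_sq_le_two_mul_of_sq_le {a b Y : ℕ} (ha : a ^ 2 ≤ Y) (hb : 8 * b ^ 2 ≤ Y) :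
    (a + b) ^ 2 ≤ 2 * Y := by
  nlinarith [sq_nonneg ((a : ℤ) - 2 * b)]

lemma two_mul_logb_le_of_sq_le_two_pow {a : ℝ} (ha : 0 < a) {N : ℕ} (h : a ^ 2 ≤ 2 ^ N) :
    2 * Real.logb 2 a ≤ N := by
  have := Real.logb_le_logb_of_le one_lt_two (pow_pos ha 2) h
  rwa [Real.logb_pow, Real.logb_pow, Real.logb_self_eq_one one_lt_two, mul_one] at this

lemma natClog_two_le_logb_one_add (d : ℕ) : (Nat.clog 2 d : ℝ) ≤ Real.logb 2 (1 + d) + 1 := by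
  rcases Nat.eq_zero_or_pos d with rfl | hd
  · simp
  have hd : (1 : ℝ) ≤ d := by exact_mod_cast hd
  calc (Nat.clog 2 d : ℝ) = ⌈Real.logb 2 d⌉₊ := by
        exact_mod_cast (Real.natCeil_logb_natCast 2 d).symm
    _ ≤ Real.logb 2 d + 1 := (Nat.ceil_lt_add_one (Real.logb_nonneg one_lt_two hd)).le
    _ ≤ Real.logb 2 (1 + d) + 1 := by gcongr <;> linarith

namespace Horoball

variable {V : Type*} {G : SimpleGraph V}

lemma snd_le_snd_add_one_of_adj {p q : V × ℕ} (h : (Horoball G).Adj p q) : q.2 ≤ p.2 + 1 := by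
  rcases h with ⟨h, -⟩ | ⟨-, h | h⟩ <;> omega

lemma snd_le_snd_add_length {p q : V × ℕ} (w : (Horoball G).Walk p q) :
    p.2 ≤ q.2 + w.length := by
  induction w with
  | nil => omega
  | cons h _ ih =>
    have := snd_le_snd_add_one_of_adj h.symm
    rw [Walk.length_cons]
    omega

lemma adj_succ (x : V) (a : ℕ) : (Horoball G).Adj (x, a) (x, a + 1) :=
  Or.inr ⟨rfl, Or.inr rfl⟩

lemma exists_walk_vertical (x : V) {a b : ℕ} (hab : a ≤ b) :
    ∃ w : (Horoball G).Walk (x, a) (x, b), w.length = b - a := by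
  induction b, hab using Nat.le_induction with
  | base => exact ⟨.nil, by simp⟩
  | succ b hab ih =>
    obtain ⟨w, hw⟩ := ih
    exact ⟨w.concat (adj_succ x b), by rw [Walk.length_concat, hw]; omega⟩

lemma exists_walk_length_le {x y : V} {m n k : ℕ} (hm : m ≤ k) (hn : n ≤ k)
    (hk : G.dist x y ≤ 2 ^ k) :
    ∃ w : (Horoball G).Walk (x, m) (y, n), w.length ≤ (k - m) + (k - n) + 1 := by
  obtain ⟨up, hup⟩ := exists_walk_vertical (G := G) x hm
  obtain ⟨down, hdown⟩ := exists_walk_vertical (G := G) y hn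
  by_cases hxy : x = y
  · subst hxy
    exact ⟨up.append down.reverse, by simp [hup, hdown]⟩
  · have across : (Horoball G).Adj (x, k) (y, k) := Or.inl ⟨rfl, hxy, hk⟩
    exact ⟨up.append (.cons across down.reverse), by simp [hup, hdown]; omega⟩

lemma exists_walk_length_add_add_le (x y : V) (m n : ℕ) :
    ∃ w : (Horoball G).Walk (x, m) (y, n),
      w.length + m + n ≤ 2 * max (max m n) (Nat.clog 2 (G.dist x y)) + 1 := by
  set k := max (max m n) (Nat.clog 2 (G.dist x y))
  obtain ⟨w, hw⟩ := exists_walk_length_le (G := G) (x := x) (y := y)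
    (show m ≤ k by omega) (show n ≤ k by omega)
    ((Nat.le_pow_clog one_lt_two _).trans (Nat.pow_le_pow_right two_pos (by omega)))
  exact ⟨w, by omega⟩

lemma reachable (p q : V × ℕ) : (Horoball G).Reachable p q :=
  let ⟨w, _⟩ := exists_walk_length_add_add_le (G := G) p.1 q.1 p.2 q.2
  ⟨w⟩

lemma dist_add_add_le (x y : V) (m n : ℕ) : (Horoball G).dist (x, m) (y, n) + m + n ≤
    2 * max (max m n) (Nat.clog 2 (G.dist x y)) + 1 := by
  obtain ⟨w, hw⟩ := exists_walk_length_add_add_le (G := G) x y m n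
  have := SimpleGraph.dist_le w
  omega

lemma snd_le_snd_add_dist (p q : V × ℕ) : p.2 ≤ q.2 + (Horoball G).dist p q := by
  obtain ⟨w, hw⟩ := (reachable p q).exists_walk_length_eq_dist
  exact hw ▸ snd_le_snd_add_length w

lemma sq_one_add_dist_le_of_walk (hG : G.Connected) {p q : V × ℕ} (w : (Horoball G).Walk p q) :
    (1 + G.dist p.1 q.1) ^ 2 ≤ 2 ^ (p.2 + q.2 + w.length + 3) := by
  induction w with
  | nil => exact Nat.one_le_two_pow.trans' (by simp)
  | @cons p r q h w ih =>
    rw [Walk.length_cons]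
    rcases h with ⟨hlevel, -, hstep⟩ | ⟨hx, hlevel⟩
    · have hr := snd_le_snd_add_length w
      have htri : G.dist p.1 q.1 ≤ G.dist r.1 q.1 + 2 ^ p.2 := by
        have := hG.dist_triangle (u := p.1) (v := r.1) (w := q.1)
        omega
      calc (1 + G.dist p.1 q.1) ^ 2 ≤ (1 + G.dist r.1 q.1 + 2 ^ p.2) ^ 2 :=
          Nat.pow_le_pow_left (by omega) 2
        _ ≤ 2 * 2 ^ (r.2 + q.2 + w.length + 3) := by
          refine add_sq_le_two_mul_of_sq_le ih ?_
          calc 8 * (2 ^ p.2) ^ 2 = 2 ^ (2 * p.2 + 3) := by ring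
            _ ≤ 2 ^ (r.2 + q.2 + w.length + 3) := Nat.pow_le_pow_right two_pos (by omega)
        _ = 2 ^ (p.2 + q.2 + (w.length + 1) + 3) := by rw [hlevel]; ring
    · have := snd_le_snd_add_one_of_adj (Or.inr ⟨hx, hlevel⟩ : (Horoball G).Adj p r)
      calc (1 + G.dist p.1 q.1) ^ 2 = (1 + G.dist r.1 q.1) ^ 2 := by rw [hx]
        _ ≤ 2 ^ (r.2 + q.2 + w.length + 3) := ih
        _ ≤ 2 ^ (p.2 + q.2 + (w.length + 1) + 3) := Nat.pow_le_pow_right two_pos (by omega)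

lemma abs_sub_le_dist (x y : V) (m n : ℕ) :
    |(m : ℝ) - n| ≤ (Horoball G).dist (x, m) (y, n) := by
  have h₁ : (m : ℝ) ≤ n + (Horoball G).dist (x, m) (y, n) := by
    exact_mod_cast snd_le_snd_add_dist (x, m) (y, n)
  have h₂ : (n : ℝ) ≤ m + (Horoball G).dist (x, m) (y, n) := by
    exact_mod_cast dist_comm (G := Horoball G) .. ▸ snd_le_snd_add_dist (y, n) (x, m)
  exact abs_sub_le_iff.2 ⟨by linarith, by linarith⟩

lemma two_mul_logb_sub_le_dist (hG : G.Connected) (x y : V) (m n : ℕ) :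
    2 * Real.logb 2 (1 + G.dist x y) - (m + n) ≤ (Horoball G).dist (x, m) (y, n) + 3 := by
  obtain ⟨w, hw⟩ := (reachable (x, m) (y, n)).exists_walk_length_eq_dist
  have hsq : ((1 + G.dist x y : ℕ) : ℝ) ^ 2 ≤ 2 ^ (m + n + w.length + 3) := by
    exact_mod_cast sq_one_add_dist_le_of_walk hG w
  have := two_mul_logb_le_of_sq_le_two_pow (by positivity) hsq
  push_cast [hw] at this
  linarith

lemma dist_le_max_add_three (x y : V) (m n : ℕ) :
    ((Horoball G).dist (x, m) (y, n) : ℝ) ≤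
      max |(m : ℝ) - n| (2 * Real.logb 2 (1 + G.dist x y) - (m + n)) + 3 := by
  have hdist : ((Horoball G).dist (x, m) (y, n) : ℝ) + m + n ≤
      2 * max (max (m : ℝ) n) (Nat.clog 2 (G.dist x y) : ℝ) + 1 := by
    exact_mod_cast dist_add_add_le x y m n
  have hclog := natClog_two_le_logb_one_add (G.dist x y)
  have hmax := le_max_left |(m : ℝ) - n| (2 * Real.logb 2 (1 + G.dist x y) - (m + n))
  have hmax' := le_max_right |(m : ℝ) - n| (2 * Real.logb 2 (1 + G.dist x y) - (m + n))
  rcases max_cases (max (m : ℝ) n) (Nat.clog 2 (G.dist x y) : ℝ) with ⟨h, -⟩ | ⟨h, -⟩ <;>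
    rcases max_cases (m : ℝ) n with ⟨h', -⟩ | ⟨h', -⟩ <;>
    linarith [le_abs_self ((m : ℝ) - n), neg_abs_le ((m : ℝ) - n)]

end Horoball

/-- There is a universal constant `C` such that the horoball distance is within `C` of
`max (|m - n|, 2 log₂(1 + d(x,y)) - (m + n))`. -/
theorem horoball_dist_approx :
    ∃ C : ℝ, ∀ (V : Type) (G : SimpleGraph V), G.Connected →
      ∀ (x y : V) (m n : ℕ),
        |((Horoball G).dist (x, m) (y, n) : ℝ) -
          max |(m : ℝ) - (n : ℝ)|
            (2 * Real.logb 2 (1 + (G.dist x y : ℝ)) - ((m : ℝ) + (n : ℝ)))| ≤ C := by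
  refine ⟨3, fun V G hG x y m n => abs_sub_le_iff.2 ⟨?_, ?_⟩⟩
  · linarith [Horoball.dist_le_max_add_three (G := G) x y m n]
  · have hlevel := Horoball.abs_sub_le_dist (G := G) x y m n
    have hlog := Horoball.two_mul_logb_sub_le_dist hG x y m n
    linarith [max_le (by linarith : |(m : ℝ) - n| ≤ _ + 3) hlog]
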